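/- For integers n ≥ r ≥ 1, k ≥ 0, and l ≥ 1, the (l,r)-Stirling number of the second kind equals a complete homogeneous symmetric polynomial: S2(n+k, n) = h_k(r^l, (r+1)^l, …, n^l), the sum over all weakly increasing sequences r ≤ i₁ ≤ i₂ ≤ ⋯ ≤ i_k ≤ n of the products (i₁ i₂ ⋯ i_k)^l. -/
import Mathlib

/-- The `(l,r)`-Stirling numbers of the second kind. -/
def S2 (l r : ℕ) : ℕ → ℕ → ℕ
  | n, k =>
    if _h1 : n < r then 0
    else if _h2 : n = r then (if k = r then 1 else 0)
    else S2 l r (n - 1) (k - 1) + k ^ l * S2 l r (n - 1) k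
termination_by n _ => n
decreasing_by all_goals omega

lemma S2_lt (l r : ℕ) (hr : 1 ≤ r) : ∀ n k, k < r → S2 l r n k = 0 := by
  intro n
  induction n using Nat.strong_induction_on with
  | _ n ih =>
    intro k hk
    rw [S2]
    split
    · rfl
    · split
      · simp [Nat.ne_of_lt hk]
      · rw [ih (n-1) (by omega) (k-1) (by omega), ih (n-1) (by omega) k hk]
        simp

lemma S2_gt (l r : ℕ) (hr : 1 ≤ r) : ∀ n k, n < k → S2 l r n k = 0 := by
  intro n
  induction n using Nat.strong_induction_on with
  | _ n ih =>
    intro k hk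
    rw [S2]
    split
    · rfl
    · split
      · have : k ≠ r := by omega
        simp [this]
      · rw [ih (n-1) (by omega) (k-1) (by omega), ih (n-1) (by omega) k (by omega)]
        simp

lemma S2_diag (l r : ℕ) (hr : 1 ≤ r) : ∀ n, r ≤ n → S2 l r n n = 1 := by
  intro n
  induction n using Nat.strong_induction_on with
  | _ n ih =>
    intro hn
    rw [S2]
    split
    · omega
    · split
      · simp_all
      · rw [ih (n-1) (by omega) (by omega), S2_gt l r hr (n-1) n (by omega)]
        simp

lemma S2_rep (l r : ℕ) (hr : 1 ≤ r) : ∀ k, S2 l r (r + k) r = (r ^ l) ^ k := by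
  intro k
  induction k with
  | zero => simpa using S2_diag l r hr r le_rfl
  | succ k ih =>
    rw [show r + (k+1) = (r + k) + 1 by ring, S2]
    split
    · omega
    · split
      · omega
      · simp only [Nat.add_sub_cancel, ih, S2_lt l r hr (r + k) (r - 1) (by omega)]
        ring

lemma sym_split (s : Finset ℕ) (a : ℕ) (ha : a ∈ s) (k : ℕ) (f : ℕ → ℕ) :
    ∑ m ∈ s.sym (k+1), ((m : Multiset ℕ).map f).prod
      = (∑ m ∈ (s.erase a).sym (k+1), ((m : Multiset ℕ).map f).prod)
        + f a * ∑ m ∈ s.sym k, ((m : Multiset ℕ).map f).prod := by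
  classical
  rw [← Finset.sum_filter_add_sum_filter_not (s.sym (k+1)) (fun m => a ∈ m), add_comm]
  congr 1
  · have h1 : (s.sym (k+1)).filter (fun m => ¬ a ∈ m) = (s.erase a).sym (k+1) := by
      ext m
      simp only [Finset.mem_filter, Finset.mem_sym_iff, Finset.mem_erase]
      constructor
      · rintro ⟨h, hna⟩ b hb
        exact ⟨fun hba => hna (hba ▸ hb), h b hb⟩
      · intro h
        exact ⟨fun b hb => (h b hb).2, fun ha' => (h a ha').1 rfl⟩
    rw [h1]
  · have h2 : (s.sym (k+1)).filter (fun m => a ∈ m) = (s.sym k).image (Sym.cons a) := by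
      ext m
      simp only [Finset.mem_filter, Finset.mem_sym_iff, Finset.mem_image]
      constructor
      · rintro ⟨h, ham⟩
        refine ⟨m.erase a ham, fun b hb => h b ?_, Sym.cons_erase ham⟩
        have hb' : (b : ℕ) ∈ ((m.erase a ham : Sym ℕ k) : Multiset ℕ) := hb
        rw [Sym.coe_erase] at hb'
        exact Multiset.mem_of_mem_erase hb'
      · rintro ⟨m', hm', rfl⟩
        refine ⟨fun b hb => ?_, Sym.mem_cons_self a m'⟩
        rcases Sym.mem_cons.mp hb with h | h
        · exact h ▸ ha
        · exact hm' b h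
    rw [h2, Finset.sum_image (fun x _ y _ h => (Sym.cons_inj_right a x y).mp h),
      Finset.mul_sum]
    refine Finset.sum_congr rfl fun m _ => ?_
    rw [Sym.coe_cons, Multiset.map_cons, Multiset.prod_cons]

theorem stmt9 (l r n k : ℕ) (hr : 1 ≤ r) (hn : r ≤ n) (hl : 1 ≤ l) :
    S2 l r (n + k) n =
      ∑ m ∈ (Finset.Icc r n).sym k, ((m : Multiset ℕ).map (fun i => i ^ l)).prod := by
  have key : ∀ N n k, n + k = N → r ≤ n →
      S2 l r (n + k) n =
        ∑ m ∈ (Finset.Icc r n).sym k, ((m : Multiset ℕ).map (fun i => i ^ l)).prod := by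
    intro N
    induction N using Nat.strong_induction_on with
    | _ N ih =>
      intro n k hN hn
      rcases Nat.eq_or_lt_of_le hn with h | h
      · subst h
        rw [S2_rep l r hr k, Finset.Icc_self, Finset.sym_singleton]
        simp [Sym.coe_replicate, Multiset.map_replicate, Multiset.prod_replicate]
      · rcases Nat.eq_zero_or_pos k with hk | hk
        · subst hk
          rw [Nat.add_zero, S2_diag l r hr n hn]
          simp [Finset.sym_zero, Sym.coe_nil]
          rfl
        · obtain ⟨k', rfl⟩ : ∃ k', k = k' + 1 := ⟨k - 1, by omega⟩
          rw [S2]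
          split
          · omega
          · split
            · omega
            · have erase_eq : (Finset.Icc r n).erase n = Finset.Icc r (n - 1) := by
                obtain ⟨m, rfl⟩ : ∃ m, n = m + 1 := ⟨n - 1, by omega⟩
                simp [Finset.Icc_erase_right, Finset.Ico_add_one_right_eq_Icc]
              have e1 : S2 l r (n + (k' + 1) - 1) (n - 1)
                  = S2 l r ((n - 1) + (k' + 1)) (n - 1) := by
                rw [show n + (k' + 1) - 1 = (n - 1) + (k' + 1) by omega]
              have e2 : S2 l r (n + (k' + 1) - 1) n = S2 l r (n + k') n := by
                rw [show n + (k' + 1) - 1 = n + k' by omega]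
              have ih1 := ih ((n-1) + (k'+1)) (by omega) (n-1) (k'+1) rfl (by omega)
              have ih2 := ih (n + k') (by omega) n k' rfl (by omega)
              rw [e1, e2, ih1, ih2,
                sym_split (Finset.Icc r n) n (by simp [Finset.mem_Icc]; omega) k',
                erase_eq]
  exact key (n + k) n k rfl hn
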